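/- If p ≡ 5 (mod 8), then neither x+1 nor x−1 is the square of a natural number, where ε_{2pq} = x + y√(2pq) is the fundamental unit of ℚ(√(2pq)). -/
import Mathlib

open IntermediateField

/-- The real quadratic field ℚ(√d) as a subfield of ℝ. -/
noncomputable def Qsqrt (d : ℕ) : IntermediateField ℚ ℝ :=
  IntermediateField.adjoin ℚ {Real.sqrt d}

/-- `z` is a unit of the ring of integers of the subfield `K` of ℝ. -/
def IsUnitOf (K : IntermediateField ℚ ℝ) (z : ℝ) : Prop :=
  z ∈ K ∧ z ≠ 0 ∧ IsIntegral ℤ z ∧ IsIntegral ℤ z⁻¹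

/-- `ε` is the fundamental unit of the real quadratic field `K`. -/
def IsFundUnit (K : IntermediateField ℚ ℝ) (ε : ℝ) : Prop :=
  IsUnitOf K ε ∧ 1 < ε ∧
    ∀ z : ℝ, IsUnitOf K z → ∃ n : ℤ, z = ε ^ n ∨ z = -(ε ^ n)

lemma descent (p q K : ℕ) (hp : p.Prime) (hpq : p ≠ q) (hq : q.Prime) (hp2 : p ≠ 2)
    (hK : ¬ p ∣ K) :
    ∀ y : ℕ, ∀ m : ℕ, m ≠ 0 → 4 * m ^ 2 * K = p * q * y ^ 2 → False := by
  intro y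
  induction y using Nat.strong_induction_on with
  | _ y ih =>
    intro m hm heq
    have hK0 : K ≠ 0 := fun h => hK (h ▸ dvd_zero p)
    have hy0 : y ≠ 0 := by
      rintro rfl
      simp at heq
      rcases heq with h | h | h <;> simp_all
    have hpdvd : p ∣ 4 * m ^ 2 * K := ⟨q * y ^ 2, by linarith [heq]⟩
    have hpm : p ∣ m := by
      rcases (hp.dvd_mul.mp hpdvd) with h | h
      · rcases hp.dvd_mul.mp h with h4 | hm2
        · have : p ∣ 2 ^ 2 := by norm_num at h4 ⊢; exact h4
          exact absurd ((Nat.prime_dvd_prime_iff_eq hp Nat.prime_two).mp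
            (hp.dvd_of_dvd_pow this)) hp2
        · exact hp.dvd_of_dvd_pow hm2
      · exact absurd h hK
    obtain ⟨m', rfl⟩ := hpm
    have hp0 : 0 < p := hp.pos
    have hpy : p ∣ y := by
      have h2 : p * (q * y ^ 2) = p * (4 * p * m' ^ 2 * K) := by ring_nf; ring_nf at heq; linarith
      have h3 : q * y ^ 2 = 4 * p * m' ^ 2 * K := Nat.eq_of_mul_eq_mul_left hp0 h2
      have : p ∣ q * y ^ 2 := ⟨4 * m' ^ 2 * K, by linarith [h3]⟩
      rcases hp.dvd_mul.mp this with h | h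
      · exact absurd ((Nat.prime_dvd_prime_iff_eq hp hq).mp h) hpq
      · exact hp.dvd_of_dvd_pow h
    obtain ⟨y', rfl⟩ := hpy
    have hm' : m' ≠ 0 := by rintro rfl; simp at hm
    have hy' : y' ≠ 0 := by rintro rfl; simp at hy0
    have heq' : 4 * m' ^ 2 * K = p * q * y' ^ 2 := by
      have : (p ^ 2) * (4 * m' ^ 2 * K) = (p ^ 2) * (p * q * y' ^ 2) := by
        ring_nf; ring_nf at heq; linarith
      exact Nat.eq_of_mul_eq_mul_left (by positivity) this
    exact ih y' (by nlinarith [hp.two_le, Nat.pos_of_ne_zero hy']) m' hm' heq'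

theorem stmt10 (p q : ℕ) (hp : p.Prime) (hq : q.Prime) (hpq : p ≠ q)
    (hp4 : p % 4 = 1) (hq4 : q % 4 = 3) (hp8 : p % 8 = 5)
    (x y : ℤ) (hx : 0 < x) (hy : 0 < y)
    (hfund : IsFundUnit (Qsqrt (2 * p * q)) ((x : ℝ) + (y : ℝ) * Real.sqrt (2 * p * q)))
    (hnorm : x ^ 2 - 2 * p * q * y ^ 2 = 1) :
    (¬ ∃ n : ℕ, x + 1 = (n : ℤ) ^ 2) ∧ (¬ ∃ n : ℕ, x - 1 = (n : ℤ) ^ 2) := by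
  have hp2 : p ≠ 2 := by rintro rfl; omega
  have hq2 : q ≠ 2 := by rintro rfl; omega
  haveI : Fact p.Prime := ⟨hp⟩
  have hxo : Odd x := by
    have h2 : Odd (x ^ 2) := ⟨(p : ℤ) * q * y ^ 2, by linear_combination hnorm⟩
    rcases Int.odd_pow.mp h2 with h | h
    · exact h
    · omega
  obtain ⟨k, hk⟩ := hxo
  have hp0' : (0:ℤ) < p := by exact_mod_cast hp.pos
  have hq0' : (0:ℤ) < q := by exact_mod_cast hq.pos
  constructor
  · rintro ⟨n, hn⟩
    have hne : Even n := by
      have h1 : Even ((n : ℤ) ^ 2) := ⟨k + 1, by omega⟩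
      exact_mod_cast Int.even_pow.mp h1 |>.1
    obtain ⟨m, rfl⟩ := hne
    have hxval : x = 4 * (m : ℤ) ^ 2 - 1 := by
      have h1 : x + 1 = ((m : ℤ) + m) ^ 2 := by exact_mod_cast hn
      linear_combination h1
    have hm0 : m ≠ 0 := by
      rintro rfl
      simp at hxval
      omega
    have hm2 : 1 ≤ 2 * m ^ 2 := by
      have := Nat.pos_of_ne_zero hm0; nlinarith
    have heqn : 4 * m ^ 2 * (2 * m ^ 2 - 1) = p * q * y.natAbs ^ 2 := by
      zify [hm2]
      rw [sq_abs]
      rw [hxval] at hnorm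
      nlinarith [hnorm]
    by_cases hdvd : p ∣ (2 * m ^ 2 - 1)
    · have h0 : ((2 * m ^ 2 - 1 : ℕ) : ZMod p) = 0 := (ZMod.natCast_eq_zero_iff _ _).mpr hdvd
      push_cast [Nat.cast_sub hm2] at h0
      have hM : ((m : ZMod p)) ≠ 0 := by
        intro h
        rw [h] at h0
        simp at h0
      have hinv : (m : ZMod p) * (m : ZMod p)⁻¹ = 1 := mul_inv_cancel₀ hM
      have hsq : IsSquare (2 : ZMod p) := by
        refine ⟨(m : ZMod p)⁻¹, ?_⟩
        linear_combination ((m : ZMod p)⁻¹^2) * h0 - 2*((m : ZMod p) * (m : ZMod p)⁻¹ + 1) * hinv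
      have := (ZMod.exists_sq_eq_two_iff hp2).mp hsq
      omega
    · exact descent p q _ hp hpq hq hp2 hdvd y.natAbs m hm0 heqn
  · rintro ⟨n, hn⟩
    have hne : Even n := by
      have h1 : Even ((n : ℤ) ^ 2) := ⟨k, by omega⟩
      exact_mod_cast Int.even_pow.mp h1 |>.1
    obtain ⟨m, rfl⟩ := hne
    have hxval : x = 4 * (m : ℤ) ^ 2 + 1 := by
      have h1 : x - 1 = ((m : ℤ) + m) ^ 2 := by exact_mod_cast hn
      linear_combination h1
    have hm0 : m ≠ 0 := by
      rintro rfl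
      simp at hxval
      rw [hxval] at hnorm
      have h2 : (0:ℤ) < 2 * (p:ℤ) * q * y ^ 2 := by positivity
      nlinarith [hnorm]
    have heqn : 4 * m ^ 2 * (2 * m ^ 2 + 1) = p * q * y.natAbs ^ 2 := by
      zify
      rw [sq_abs]
      rw [hxval] at hnorm
      nlinarith [hnorm]
    by_cases hdvd : p ∣ (2 * m ^ 2 + 1)
    · have h0 : ((2 * m ^ 2 + 1 : ℕ) : ZMod p) = 0 := (ZMod.natCast_eq_zero_iff _ _).mpr hdvd
      push_cast at h0
      have hM : ((m : ZMod p)) ≠ 0 := by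
        intro h
        rw [h] at h0
        simp at h0
      have hinv : (m : ZMod p) * (m : ZMod p)⁻¹ = 1 := mul_inv_cancel₀ hM
      have hsqn2 : IsSquare (-2 : ZMod p) := by
        refine ⟨(m : ZMod p)⁻¹, ?_⟩
        linear_combination (-((m : ZMod p)⁻¹^2)) * h0 + 2*((m : ZMod p) * (m : ZMod p)⁻¹ + 1) * hinv
      have hsqn1 : IsSquare (-1 : ZMod p) := ZMod.exists_sq_eq_neg_one_iff.mpr (by omega)
      obtain ⟨a, ha⟩ := hsqn2
      obtain ⟨b, hb⟩ := hsqn1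
      have hsq : IsSquare (2 : ZMod p) := ⟨a * b, by linear_combination (b*b)*ha - 2*hb⟩
      have := (ZMod.exists_sq_eq_two_iff hp2).mp hsq
      omega
    · exact descent p q _ hp hpq hq hp2 hdvd y.natAbs m hm0 heqn
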